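/- The set of infinite binary overlap-free words is uncountable. -/
import Mathlib


/-- An overlap: a word of the form a x a x a, with `a` a single letter. -/
def Overlap (w : List (Fin 2)) : Prop :=
  ∃ (a : Fin 2) (x : List (Fin 2)), w = [a] ++ x ++ [a] ++ x ++ [a]

/-- `w` occurs as a (contiguous) factor of the infinite word `x`. -/
def FactorOf (w : List (Fin 2)) (x : ℕ → Fin 2) : Prop :=
  ∃ i, w = (List.range w.length).map (fun j => x (i + j))

/-- An infinite binary word is overlap-free if no finite factor is an overlap. -/
def OverlapFree (x : ℕ → Fin 2) : Prop :=
  ∀ w, FactorOf w x → ¬ Overlap w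

/-- The Thue–Morse morphism applied to an infinite word. -/
def mu (x : ℕ → Fin 2) : ℕ → Fin 2 :=
  fun n => if n % 2 = 0 then x (n / 2) else 1 - x (n / 2)

/-- Prepend a finite word to an infinite word. -/
def prepend (p : List (Fin 2)) (w : ℕ → Fin 2) : ℕ → Fin 2 :=
  fun n => if h : n < p.length then p.get ⟨n, h⟩ else w (n - p.length)

/-- `x` begins with the finite word `p`. -/
def BeginsWith (x : ℕ → Fin 2) (p : List (Fin 2)) : Prop :=
  ∀ i < p.length, x i = p.getD i 0

def sh (b : ℕ → Fin 2) : ℕ → Fin 2 := fun i => b (i + 1)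

def Wf (ℓ : Fin 2) (b : ℕ → Fin 2) (n : ℕ) : Fin 2 :=
  if h : n / 2 = 0 then
    (if n % 2 = 0 then ℓ else 1 - ℓ)
  else
    let r : Fin 2 :=
      if b 0 = 0 then Wf (1 - ℓ) (sh b) ((n / 2 - 1) / 2)
      else if (n / 2 - 1) / 2 % 2 = 0 then Wf ℓ (sh b) ((n / 2 - 1) / 2 / 2)
        else 1 - Wf ℓ (sh b) ((n / 2 - 1) / 2 / 2)
    let v := if (n / 2 - 1) % 2 = 0 then r else 1 - r
    if n % 2 = 0 then v else 1 - v
termination_by n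
decreasing_by all_goals omega

def Rw (ℓ : Fin 2) (b : ℕ → Fin 2) : ℕ → Fin 2 :=
  if b 0 = 0 then Wf (1 - ℓ) (sh b) else mu (Wf ℓ (sh b))

lemma mu_ev (u : ℕ → Fin 2) {n : ℕ} (h : n % 2 = 0) : mu u n = u (n / 2) := by
  simp only [mu]; rw [if_pos h]
lemma mu_od (u : ℕ → Fin 2) {n : ℕ} (h : n % 2 = 1) : mu u n = 1 - u (n / 2) := by
  simp only [mu]; rw [if_neg (by omega)]
lemma prep_pos (c : Fin 2) (z : ℕ → Fin 2) (n : ℕ) (h : 1 ≤ n) :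
    prepend [c] z n = z (n - 1) := by
  simp only [prepend, List.length_singleton]
  rw [dif_neg (by omega)]
lemma prep_zero (c : Fin 2) (z : ℕ → Fin 2) : prepend [c] z 0 = c := rfl
lemma prep_succ (c : Fin 2) (z : ℕ → Fin 2) (k : ℕ) : prepend [c] z (k + 1) = z k := by
  rw [prep_pos _ _ _ (by omega)]; congr 1

lemma Wf_eq (ℓ : Fin 2) (b : ℕ → Fin 2) :
    Wf ℓ b = mu (prepend [ℓ] (mu (Rw ℓ b))) := by
  funext n
  rw [Wf]
  by_cases h : n / 2 = 0
  · rw [dif_pos h]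
    have hn : n = 0 ∨ n = 1 := by omega
    rcases hn with rfl | rfl
    · rw [if_pos (by omega), mu_ev _ (by omega)]
      exact (prep_zero _ _).symm
    · rw [if_neg (by omega), mu_od _ (by omega)]
      rw [show (1:ℕ)/2 = 0 by omega]
      exact congrArg (1 - ·) (prep_zero _ _).symm
  · rw [dif_neg h]
    have h2 : 1 ≤ n / 2 := by omega
    have hform : prepend [ℓ] (mu (Rw ℓ b)) (n / 2)
        = (let r : Fin 2 :=
            if b 0 = 0 then Wf (1 - ℓ) (sh b) ((n / 2 - 1) / 2)
            else if (n / 2 - 1) / 2 % 2 = 0 then Wf ℓ (sh b) ((n / 2 - 1) / 2 / 2)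
              else 1 - Wf ℓ (sh b) ((n / 2 - 1) / 2 / 2)
           if (n / 2 - 1) % 2 = 0 then r else 1 - r) := by
      rw [prep_pos _ _ _ h2]
      by_cases hm : (n / 2 - 1) % 2 = 0
      · rw [mu_ev _ hm]
        simp only [if_pos hm, Rw]
        by_cases hb : b 0 = 0
        · rw [if_pos hb, if_pos hb]
        · rw [if_neg hb, if_neg hb]
          by_cases ht : (n / 2 - 1) / 2 % 2 = 0
          · rw [mu_ev _ ht, if_pos ht]
          · rw [mu_od _ (by omega), if_neg ht]
      · rw [mu_od _ (by omega)]
        simp only [if_neg hm, Rw]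
        by_cases hb : b 0 = 0
        · rw [if_pos hb, if_pos hb]
        · rw [if_neg hb, if_neg hb]
          by_cases ht : (n / 2 - 1) / 2 % 2 = 0
          · rw [mu_ev _ ht, if_pos ht]
          · rw [mu_od _ (by omega), if_neg ht]
    by_cases hn2 : n % 2 = 0
    · rw [mu_ev _ hn2, hform]; rw [if_pos hn2]
    · rw [mu_od _ (by omega), hform]; rw [if_neg hn2]

-- Fin 2 helpers
lemma fin2_cases : ∀ a : Fin 2, a = 0 ∨ a = 1 := by decide
lemma f2A : ∀ a : Fin 2, 1 - (1 - a) = a := by decide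
lemma f2B : ∀ a b : Fin 2, 1 - a = 1 - b → a = b := by decide
lemma f2C : ∀ a : Fin 2, ¬ a = 1 - a := by decide
lemma f2D : ∀ a : Fin 2, ¬ a = 1 + a := by decide
lemma f2E : ∀ a b c : Fin 2, 1 - a = b + c → a = 1 + b + c := by decide
lemma f2F : ∀ a b : Fin 2, a = 1 - b → b = 1 - a := by decide
lemma f2G : ∀ a : Fin 2, a = 1 - (1 + a) := by decide
lemma f2H : ∀ a : Fin 2, 1 - a = 1 + a := by decide
lemma f2I : ∀ a : Fin 2, a = 1 + 0 + (1 - a) := by decide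
lemma f2J : ∀ a : Fin 2, a = 1 + 1 + a := by decide
lemma f2K : ∀ a : Fin 2, ¬ 1 - a = a := by decide

lemma mu_block (u : ℕ → Fin 2) {n : ℕ} (h : n % 2 = 0) : mu u (n + 1) = 1 - mu u n := by
  rw [mu_ev u h, mu_od u (by omega), show (n+1)/2 = n/2 by omega]

lemma mu_even (u : ℕ → Fin 2) (k : ℕ) : mu u (2 * k) = u k := by
  rw [mu_ev u (by omega), show 2*k/2 = k by omega]

def OVp (X : ℕ → Fin 2) (i p : ℕ) : Prop := ∀ j, j ≤ p → X (i + j) = X (i + p + j)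

def SQ (X : ℕ → Fin 2) (q : ℕ) (e : Fin 2) : Prop :=
  (∀ t, t + 1 ≤ q → X t = X (t + q)) ∧ X (q - 1) = e + X 0

lemma alt_contra (X : ℕ → Fin 2) (i q : ℕ) (hq : q % 2 = 1)
    (step : ∀ m, m + 1 ≤ q → X (i + m + 1) = 1 - X (i + m))
    (h0 : X i = X (i + q)) : False := by
  have key : ∀ m, m ≤ q → X (i + m) = if m % 2 = 0 then X i else 1 - X i := by
    intro m
    induction m with
    | zero => intro _; simp
    | succ k ih =>
      intro hk
      show X (i + k + 1) = _
      rw [step k (by omega), ih (by omega)]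
      by_cases h2 : k % 2 = 0
      · rw [if_pos h2, if_neg (by omega)]
      · rw [if_neg h2, if_pos (by omega), f2A]
  have hk := key q le_rfl
  rw [if_neg (by omega), ← h0] at hk
  exact f2C (X i) hk

lemma ov_mu_odd {u : ℕ → Fin 2} {i p : ℕ} (hp : p % 2 = 1) (h : OVp (mu u) i p) : False := by
  apply alt_contra (mu u) i p hp ?_ ?_
  · intro m hm
    by_cases he : (i + m) % 2 = 0
    · exact mu_block u he
    · have h1 := h m (by omega)
      have h2 := h (m + 1) hm
      have hb := mu_block u (n := i + p + m) (by omega)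
      show mu u (i + (m + 1)) = 1 - mu u (i + m)
      rw [h2, h1]
      exact hb
  · have := h 0 (by omega)
    simpa using this

lemma sq_mu_odd {u : ℕ → Fin 2} {q : ℕ} (hq : q % 2 = 1)
    (h : ∀ t, t + 1 ≤ q → mu u t = mu u (t + q)) : False := by
  apply alt_contra (mu u) 0 q hq ?_ ?_
  · intro m hm
    simp only [Nat.zero_add]
    by_cases he : m % 2 = 0
    · exact mu_block u he
    · have hm2 : m + 2 ≤ q := by omega
      have h1 := h m (by omega)
      have h2 := h (m + 1) (by omega)
      have hb := mu_block u (n := m + q) (by omega)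
      rw [h2, h1, show m + 1 + q = m + q + 1 by omega]
      exact hb
  · simpa using h 0 (by omega)

lemma dsq_mu_odd {u : ℕ → Fin 2} {v : ℕ} (hv : v % 2 = 1) (h2v : 2 ≤ v)
    (h : ∀ s, s + 2 ≤ v → mu u s = mu u (s + v))
    (hC : mu u (v - 1) = 1 - mu u (v - 2)) : False := by
  apply alt_contra (mu u) 0 v hv ?_ ?_
  · intro m hm
    simp only [Nat.zero_add]
    by_cases he : m % 2 = 0
    · exact mu_block u he
    · by_cases hlast : m = v - 2
      · subst hlast
        rw [show v - 2 + 1 = v - 1 by omega]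
        exact hC
      · have hm3 : m + 3 ≤ v := by omega
        have h1 := h m (by omega)
        have h2 := h (m + 1) (by omega)
        have hb := mu_block u (n := m + v) (by omega)
        rw [h2, h1, show m + 1 + v = m + v + 1 by omega]
        exact hb
  · simpa using h 0 (by omega)

lemma ov_mu_even {u : ℕ → Fin 2} {i p q : ℕ} (hpq : p = 2 * q) (h : OVp (mu u) i p) :
    OVp u (i / 2) q := by
  intro j hj
  have h' := h (2 * j) (by omega)
  by_cases hi : i % 2 = 0
  · rw [mu_ev _ (by omega), mu_ev _ (by omega),
      show (i + 2 * j) / 2 = i / 2 + j by omega,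
      show (i + p + 2 * j) / 2 = i / 2 + q + j by omega] at h'
    exact h'
  · rw [mu_od _ (by omega), mu_od _ (by omega),
      show (i + 2 * j) / 2 = i / 2 + j by omega,
      show (i + p + 2 * j) / 2 = i / 2 + q + j by omega] at h'
    exact f2B _ _ h'

lemma sq_mu_even {u : ℕ → Fin 2} {q s : ℕ} (hqs : q = 2 * s)
    (h : ∀ t, t + 1 ≤ q → mu u t = mu u (t + q)) :
    ∀ t, t + 1 ≤ s → u t = u (t + s) := by
  intro t ht
  have h' := h (2 * t) (by omega)
  rw [mu_ev _ (by omega), mu_ev _ (by omega),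
    show 2 * t / 2 = t by omega, show (2 * t + q) / 2 = t + s by omega] at h'
  exact h'

lemma dsq_mu_even {u : ℕ → Fin 2} {v w : ℕ} (hvw : v = 2 * w)
    (h : ∀ s, s + 2 ≤ v → mu u s = mu u (s + v)) :
    ∀ t, t + 1 ≤ w → u t = u (t + w) := by
  intro t ht
  have h' := h (2 * t) (by omega)
  rw [mu_ev _ (by omega), mu_ev _ (by omega),
    show 2 * t / 2 = t by omega, show (2 * t + v) / 2 = t + w by omega] at h'
  exact h'

lemma mu_zero (u : ℕ → Fin 2) : mu u 0 = u 0 := by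
  rw [mu_ev u (by omega)]

lemma sq_step {u : ℕ → Fin 2} {q : ℕ} {e : Fin 2} (hq : 1 ≤ q) (h : SQ (mu u) q e) :
    ∃ s, 1 ≤ s ∧ q = 2 * s ∧ SQ u s (1 + e) := by
  obtain ⟨h1, h2⟩ := h
  by_cases hpar : q % 2 = 1
  · exact (sq_mu_odd hpar h1).elim
  · refine ⟨q / 2, by omega, by omega, sq_mu_even (by omega) h1, ?_⟩
    rw [mu_zero, mu_od _ (by omega : (q - 1) % 2 = 1),
      show (q - 1) / 2 = q / 2 - 1 by omega] at h2
    exact f2E _ _ _ h2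

lemma Wf_zero (ℓ : Fin 2) (b : ℕ → Fin 2) : Wf ℓ b 0 = ℓ := by
  rw [Wf]; norm_num

lemma Rw_zero (ℓ : Fin 2) (b : ℕ → Fin 2) :
    Rw ℓ b 0 = if b 0 = 0 then 1 - ℓ else ℓ := by
  by_cases hb : b 0 = 0
  · rw [Rw, if_pos hb, if_pos hb, Wf_zero]
  · rw [Rw, if_neg hb, if_neg hb, mu_zero, Wf_zero]

lemma sq_prep {ℓ : Fin 2} {b : ℕ → Fin 2} {s : ℕ} (hs : 1 ≤ s)
    (h : SQ (prepend [ℓ] (mu (Rw ℓ b))) s 1) :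
    ∃ w, 1 ≤ w ∧ s = 2 * w ∧ SQ (Rw ℓ b) w (b 0) := by
  obtain ⟨h1, h2⟩ := h
  by_cases hs1 : s = 1
  · exfalso
    rw [hs1] at h2
    exact f2D _ h2
  · have hs2 : 2 ≤ s := by omega
    have hM : ∀ t, t + 2 ≤ s → mu (Rw ℓ b) t = mu (Rw ℓ b) (t + s) := by
      intro t ht
      have hh := h1 (t + 1) (by omega)
      rwa [prep_succ, show t + 1 + s = t + s + 1 by omega, prep_succ] at hh
    have hMs : mu (Rw ℓ b) (s - 1) = ℓ := by
      have hh := h1 0 (by omega)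
      rw [prep_zero, show 0 + s = s - 1 + 1 by omega, prep_succ] at hh
      exact hh.symm
    have hC : mu (Rw ℓ b) (s - 1) = 1 - mu (Rw ℓ b) (s - 2) := by
      rw [prep_zero, show s - 1 = s - 2 + 1 by omega, prep_succ] at h2
      rw [hMs, h2]
      exact f2G ℓ
    by_cases hpar : s % 2 = 1
    · exact (dsq_mu_odd hpar hs2 hM hC).elim
    · refine ⟨s / 2, by omega, by omega, dsq_mu_even (by omega) hM, ?_⟩
      have hr : Rw ℓ b (s / 2 - 1) = 1 - ℓ := by
        have hx : mu (Rw ℓ b) (s - 1) = 1 - Rw ℓ b (s / 2 - 1) := by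
          rw [mu_od _ (by omega : (s - 1) % 2 = 1), show (s - 1) / 2 = s / 2 - 1 by omega]
        rw [hMs] at hx
        exact f2F _ _ hx
      rw [hr, Rw_zero]
      rcases fin2_cases (b 0) with hb | hb <;> rw [hb]
      · rw [if_pos rfl]; exact (zero_add _).symm
      · rw [if_neg (by decide)]; exact f2H ℓ

lemma no_sq_R : ∀ q, 1 ≤ q → ∀ ℓ b, ¬ SQ (Rw ℓ b) q (b 0) := by
  intro q
  induction q using Nat.strong_induction_on with
  | _ q IH =>
    intro hq ℓ b hSQ
    rcases fin2_cases (b 0) with hb | hb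
    · have hR : Rw ℓ b = mu (prepend [1 - ℓ] (mu (Rw (1 - ℓ) (sh b)))) := by
        rw [Rw, if_pos hb, Wf_eq]
      rw [hR, hb] at hSQ
      obtain ⟨s, hs1, hs2, hSQ2⟩ := sq_step hq hSQ
      rw [show (1 : Fin 2) + 0 = 1 by decide] at hSQ2
      obtain ⟨w, hw1, hw2, hSQ3⟩ := sq_prep hs1 hSQ2
      exact IH w (by omega) hw1 (1 - ℓ) (sh b) hSQ3
    · have hR : Rw ℓ b = mu (Wf ℓ (sh b)) := by
        rw [Rw, if_neg (by rw [hb]; decide)]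
      rw [hR, hb] at hSQ
      obtain ⟨u1, hu1, hu2, hSQ2⟩ := sq_step hq hSQ
      rw [show (1 : Fin 2) + 1 = 0 by decide, Wf_eq] at hSQ2
      obtain ⟨s, hs1, hs2, hSQ3⟩ := sq_step hu1 hSQ2
      rw [show (1 : Fin 2) + 0 = 1 by decide] at hSQ3
      obtain ⟨w, hw1, hw2, hSQ4⟩ := sq_prep hs1 hSQ3
      exact IH w (by omega) hw1 ℓ (sh b) hSQ4

lemma ov_prep {c : Fin 2} {z : ℕ → Fin 2} {k p : ℕ}
    (h : OVp (prepend [c] z) (k + 1) p) : OVp z k p := by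
  intro j hj
  have hh := h j hj
  rwa [show k + 1 + j = k + j + 1 by omega, prep_succ,
    show k + 1 + p + j = k + p + j + 1 by omega, prep_succ] at hh

lemma no_OV : ∀ p, 1 ≤ p → ∀ i ℓ b, ¬ OVp (Wf ℓ b) i p := by
  intro p
  induction p using Nat.strong_induction_on with
  | _ p IH =>
    intro hp i ℓ b hOV
    rw [Wf_eq] at hOV
    by_cases hpar : p % 2 = 1
    · exact ov_mu_odd hpar hOV
    · have h1 : OVp (prepend [ℓ] (mu (Rw ℓ b))) (i / 2) (p / 2) :=
        ov_mu_even (by omega) hOV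
      have hp1 : 1 ≤ p / 2 := by omega
      by_cases hi : i / 2 = 0
      · rw [hi] at h1
        have hM : ∀ t, t + 1 ≤ p / 2 → mu (Rw ℓ b) t = mu (Rw ℓ b) (t + p / 2) := by
          intro t ht
          have hh := h1 (t + 1) (by omega)
          simp only [Nat.zero_add] at hh
          rwa [prep_succ, show p / 2 + (t + 1) = p / 2 + t + 1 by omega, prep_succ,
            Nat.add_comm (p / 2) t] at hh
        have hMs : mu (Rw ℓ b) (p / 2 - 1) = ℓ := by
          have hh := h1 0 (by omega)
          simp only [Nat.zero_add, Nat.add_zero] at hh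
          rw [prep_zero, show p / 2 = p / 2 - 1 + 1 by omega, prep_succ] at hh
          exact hh.symm
        have hSQ : SQ (mu (Rw ℓ b)) (p / 2) (1 + b 0) := by
          refine ⟨hM, ?_⟩
          rw [hMs, mu_zero, Rw_zero]
          rcases fin2_cases (b 0) with hb | hb <;> rw [hb]
          · rw [if_pos rfl]
            exact f2I ℓ
          · rw [if_neg (by decide)]
            exact f2J ℓ
        obtain ⟨s, hs1, hs2, hSQ2⟩ := sq_step hp1 hSQ
        rw [show ∀ c : Fin 2, (1 : Fin 2) + (1 + c) = c by decide] at hSQ2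
        exact no_sq_R s hs1 ℓ b hSQ2
      · rw [show i / 2 = i / 2 - 1 + 1 by omega] at h1
        have h2 : OVp (mu (Rw ℓ b)) (i / 2 - 1) (p / 2) := ov_prep h1
        by_cases hpar2 : p / 2 % 2 = 1
        · exact ov_mu_odd hpar2 h2
        · have h3 : OVp (Rw ℓ b) ((i / 2 - 1) / 2) (p / 2 / 2) :=
            ov_mu_even (by omega) h2
          rcases fin2_cases (b 0) with hb | hb
          · rw [Rw, if_pos hb] at h3
            exact IH (p / 2 / 2) (by omega) (by omega) _ (1 - ℓ) (sh b) h3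
          · rw [Rw, if_neg (by rw [hb]; decide)] at h3
            by_cases hpar3 : p / 2 / 2 % 2 = 1
            · exact ov_mu_odd hpar3 h3
            · have h4 : OVp (Wf ℓ (sh b)) ((i / 2 - 1) / 2 / 2) (p / 2 / 2 / 2) :=
                ov_mu_even (by omega) h3
              exact IH (p / 2 / 2 / 2) (by omega) (by omega) _ ℓ (sh b) h4

lemma getElem_uuc (u : List (Fin 2)) (c : Fin 2) (hu : u ≠ [])
    (hc : u.head hu = c) (j : ℕ) (hj : j ≤ u.length)
    (h1 : j < (u ++ (u ++ [c])).length) (h2 : u.length + j < (u ++ (u ++ [c])).length) :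
    (u ++ (u ++ [c]))[j] = (u ++ (u ++ [c]))[u.length + j] := by
  rw [List.getElem_append_right (by omega : u.length ≤ u.length + j)]
  by_cases hlt : j < u.length
  · rw [List.getElem_append_left hlt, List.getElem_append_left (by omega : u.length + j - u.length < u.length)]
    congr 1
    omega
  · have hjl : j = u.length := by omega
    rw [List.getElem_append_right (by omega : u.length ≤ j),
      List.getElem_append_right (by omega : u.length ≤ u.length + j - u.length)]
    have e1 : u.length + j - u.length - u.length = 0 := by omega
    have e2 : j - u.length = 0 := by omega
    simp only [e1, e2]
    rw [List.getElem_append_left (List.length_pos_iff.mpr hu)]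
    rw [List.getElem_singleton, ← hc, List.head_eq_getElem]

def OverlapFree' (x : ℕ → Fin 2) : Prop := ∀ p, 1 ≤ p → ∀ i, ¬ OVp x i p

lemma wf_overlapFree (ℓ : Fin 2) (b : ℕ → Fin 2) :
    ∀ w, (∃ i, w = (List.range w.length).map (fun j => Wf ℓ b (i + j))) →
      ¬ ∃ (a : Fin 2) (x : List (Fin 2)), w = [a] ++ x ++ [a] ++ x ++ [a] := by
  rintro w ⟨i, hw⟩ ⟨a, x, hov⟩
  set p := x.length + 1 with hp
  have hlen : w.length = 2 * p + 1 := by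
    rw [hov]; simp [hp]; omega
  have hget : ∀ k (hk : k < w.length), w[k] = Wf ℓ b (i + k) := by
    intro k hk
    rw [List.getElem_of_eq hw hk, List.getElem_map, List.getElem_range]
  have hw2 : w = (a :: x) ++ ((a :: x) ++ [a]) := by
    rw [hov]; simp
  have hul : (a :: x).length = p := by simp [hp]
  apply no_OV p (by omega) i ℓ b
  intro j hj
  have e1 : Wf ℓ b (i + j) = w[j]'(by omega) := (hget j (by omega)).symm
  have e2 : Wf ℓ b (i + p + j) = w[p + j]'(by omega) := by
    have hh := hget (p + j) (by omega)
    rw [show i + (p + j) = i + p + j by omega] at hh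
    exact hh.symm
  rw [e1, e2]
  have h1 : j < ((a :: x) ++ ((a :: x) ++ [a])).length := by rw [← hw2]; omega
  have h2 : (a :: x).length + j < ((a :: x) ++ ((a :: x) ++ [a])).length := by
    rw [← hw2]; rw [hul]; omega
  have key := getElem_uuc (a :: x) a (by simp) rfl j (by omega) h1 h2
  have e3 : w[j]'(by omega) = ((a :: x) ++ ((a :: x) ++ [a]))[j]'h1 :=
    List.getElem_of_eq hw2 _
  have e4 : w[p + j]'(by omega) = ((a :: x) ++ ((a :: x) ++ [a]))[(a :: x).length + j]'h2 := by
    have := List.getElem_of_eq hw2 (show p + j < w.length by omega)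
    rw [this]
    congr 1
  rw [e3, e4]
  exact key

lemma mu_inj {u v : ℕ → Fin 2} (h : mu u = mu v) : u = v := by
  funext k
  have := congrFun h (2 * k)
  rwa [mu_even, mu_even] at this

lemma prep_inj {c : Fin 2} {z z' : ℕ → Fin 2} (h : prepend [c] z = prepend [c] z') :
    z = z' := by
  funext k
  have := congrFun h (k + 1)
  rwa [prep_succ, prep_succ] at this

lemma Wf_two (ℓ : Fin 2) (b : ℕ → Fin 2) : Wf ℓ b 2 = Rw ℓ b 0 := by
  rw [Wf_eq, mu_ev _ (by omega : 2 % 2 = 0), show (2:ℕ)/2 = 1 by omega,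
    prep_succ, mu_zero]

lemma b0_of_eq {ℓ : Fin 2} {b b' : ℕ → Fin 2} (h : Wf ℓ b = Wf ℓ b') : b 0 = b' 0 := by
  have h2 := congrFun h 2
  rw [Wf_two, Wf_two, Rw_zero, Rw_zero] at h2
  rcases fin2_cases (b 0) with hb | hb <;> rcases fin2_cases (b' 0) with hb' | hb' <;>
    rw [hb, hb'] <;> rw [hb, hb'] at h2
  · rw [if_pos rfl, if_neg (by decide)] at h2
    exact absurd h2 (f2K ℓ)
  · rw [if_neg (by decide), if_pos rfl] at h2
    exact absurd h2 (f2C ℓ)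

lemma Rw_of_eq {ℓ : Fin 2} {b b' : ℕ → Fin 2} (h : Wf ℓ b = Wf ℓ b') :
    Rw ℓ b = Rw ℓ b' := by
  have h0 : mu (prepend [ℓ] (mu (Rw ℓ b))) = mu (prepend [ℓ] (mu (Rw ℓ b'))) := by
    rw [← Wf_eq, ← Wf_eq]; exact h
  exact mu_inj (prep_inj (mu_inj h0))

lemma Wf_b_inj : ∀ n (ℓ : Fin 2) (b b' : ℕ → Fin 2), Wf ℓ b = Wf ℓ b' → b n = b' n := by
  intro n
  induction n with
  | zero => exact fun ℓ b b' h => b0_of_eq h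
  | succ n IHn =>
    intro ℓ b b' h
    have hb0 : b 0 = b' 0 := b0_of_eq h
    have hR := Rw_of_eq h
    rcases fin2_cases (b 0) with hb | hb
    · rw [Rw, Rw, if_pos hb, if_pos (hb0 ▸ hb)] at hR
      exact IHn (1 - ℓ) (sh b) (sh b') hR
    · have hb' : b' 0 = 1 := hb0 ▸ hb
      rw [Rw, Rw, if_neg (by rw [hb]; decide), if_neg (by rw [hb']; decide)] at hR
      exact IHn ℓ (sh b) (sh b') (mu_inj hR)

theorem overlapFree_uncountable :
    ¬ ({x : ℕ → Fin 2 | OverlapFree x}).Countable := by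
  intro hS
  have hr : (Set.range (fun b => Wf 0 b)).Countable := by
    refine hS.mono ?_
    rintro _ ⟨b, rfl⟩
    exact wf_overlapFree 0 b
  have hinj : Function.Injective (fun b => Wf 0 b) := by
    intro b b' h
    funext n
    exact Wf_b_inj n 0 b b' h
  have : Countable (ℕ → Fin 2) := by
    have := hr.to_subtype
    exact Countable.of_equiv _ (Equiv.ofInjective _ hinj).symm
  obtain ⟨g, hg⟩ := exists_surjective_nat (ℕ → Fin 2)
  obtain ⟨m, hm⟩ := hg (fun n => 1 - g n n)
  have := congrFun hm m
  exact f2C _ this
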